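/- Let n ≥ 2, let a be a symmetric positive semidefinite n×n real matrix, and suppose there is K > 0 such that ξᵀ a ξ ≤ K‖ξ‖² for every ξ ∈ ℝⁿ. Then for every long-only portfolio vector π (i.e. π ∈ ℝⁿ with πᵢ ≥ 0 for all i and Σᵢ πᵢ = 1), the excess growth rate γ*_π(a) := (1/2)(Σᵢ πᵢ aᵢᵢ − Σᵢ Σⱼ πᵢ aᵢⱼ πⱼ) satisfies γ*_π(a) ≤ 2K(1 − maxᵢ πᵢ). -/
import Mathlib


open Finset Matrix

/-- the bounded-variance upper bound on the excess growth rate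
of a long-only portfolio. -/
theorem diversity_excess_growth_upper_bound
    (n : ℕ) (hn : 2 ≤ n)
    (a : Matrix (Fin n) (Fin n) ℝ) (hsym : a.IsSymm) (hpsd : a.PosSemidef)
    (K : ℝ) (hK : 0 < K)
    (hbv : ∀ ξ : Fin n → ℝ, ξ ⬝ᵥ a.mulVec ξ ≤ K * ∑ i, ξ i ^ 2)
    (π : Fin n → ℝ) (hπ0 : ∀ i, 0 ≤ π i) (hπ1 : ∑ i, π i = 1) :
    (1 / 2) * (∑ i, π i * a i i - ∑ i, ∑ j, π i * a i j * π j) ≤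
      2 * K * (1 - Finset.univ.sup' ⟨⟨0, by omega⟩, Finset.mem_univ _⟩ π) := by
  set M : ℝ := Finset.univ.sup' ⟨⟨0, by omega⟩, Finset.mem_univ _⟩ π with hM
  obtain ⟨μ, -, hμ⟩ := Finset.exists_mem_eq_sup' ⟨(⟨0, by omega⟩ : Fin n), Finset.mem_univ _⟩ π
  have hMμ : M = π μ := hM.trans hμ
  set S : ℝ := ∑ j, π j ^ 2 with hS
  set Q : ℝ := ∑ i, ∑ j, π i * a i j * π j with hQ
  have hM0 : 0 ≤ M := hMμ ▸ hπ0 μ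
  have hM1 : M ≤ 1 := by
    rw [hMμ]
    calc π μ ≤ ∑ i, π i := Finset.single_le_sum (fun i _ => hπ0 i) (Finset.mem_univ μ)
    _ = 1 := hπ1
  have hSM : M ^ 2 ≤ S := by
    rw [hMμ, hS]
    exact Finset.single_le_sum (fun i _ => sq_nonneg (π i)) (Finset.mem_univ μ)
  have hsymm : ∀ j k, a j k = a k j := fun j k => by
    have := congrFun (congrFun hsym.symm j) k; simpa [Matrix.transpose_apply] using this
  -- key per-index inequality
  have key : ∀ i, a i i - 2 * (∑ j, a i j * π j) + Q ≤ K * (1 - 2 * π i + S) := by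
    intro i
    have h := hbv (fun j => (if j = i then (1:ℝ) else 0) - π j)
    have hL : (fun j => (if j = i then (1:ℝ) else 0) - π j) ⬝ᵥ
        a.mulVec (fun j => (if j = i then (1:ℝ) else 0) - π j)
        = a i i - 2 * (∑ j, a i j * π j) + Q := by
      simp only [dotProduct, mulVec]
      have inner : ∀ j, (∑ k, a j k * ((if k = i then (1:ℝ) else 0) - π k))
          = a j i - ∑ k, a j k * π k := by
        intro j
        simp [mul_sub, Finset.sum_sub_distrib, mul_ite, mul_one, mul_zero,
          Finset.sum_ite_eq', Finset.mem_univ]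
      simp_rw [inner]
      have e0 : ∑ j, ((if j = i then (1:ℝ) else 0) - π j) * (a j i - ∑ k, a j k * π k)
          = ∑ j, ((if j = i then (1:ℝ) else 0) * a j i
              - (if j = i then (1:ℝ) else 0) * ∑ k, a j k * π k
              - π j * a j i + π j * ∑ k, a j k * π k) :=
        Finset.sum_congr rfl fun j _ => by ring
      rw [e0, Finset.sum_add_distrib, Finset.sum_sub_distrib, Finset.sum_sub_distrib]
      simp only [ite_mul, one_mul, zero_mul, Finset.sum_ite_eq', Finset.mem_univ, if_true]
      have e1 : ∑ j, π j * a j i = ∑ j, a i j * π j :=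
        Finset.sum_congr rfl fun j _ => by rw [hsymm j i, mul_comm]
      have e2 : ∑ j, π j * ∑ k, a j k * π k = Q := by
        rw [hQ]
        exact Finset.sum_congr rfl fun j _ => by
          rw [Finset.mul_sum]
          exact Finset.sum_congr rfl fun k _ => by ring
      rw [e1, e2]; ring
    have hR : (∑ j, ((if j = i then (1:ℝ) else 0) - π j) ^ 2) = 1 - 2 * π i + S := by
      have e0 : ∀ j, ((if j = i then (1:ℝ) else 0) - π j) ^ 2
          = ((if j = i then (1:ℝ) else 0) - 2 * ((if j = i then (1:ℝ) else 0) * π j) + π j ^ 2) := by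
        intro j; split <;> ring
      rw [Finset.sum_congr rfl fun j _ => e0 j, Finset.sum_add_distrib, Finset.sum_sub_distrib]
      simp only [ite_mul, one_mul, zero_mul, Finset.mul_sum, Finset.sum_ite_eq',
        Finset.mem_univ, if_true]
      simp [hS]
    rw [hL, hR] at h
    exact h
  -- sum the key inequality weighted by π
  have hsum : ∑ i, π i * (a i i - 2 * (∑ j, a i j * π j) + Q)
      ≤ ∑ i, π i * (K * (1 - 2 * π i + S)) :=
    Finset.sum_le_sum fun i _ => mul_le_mul_of_nonneg_left (key i) (hπ0 i)
  have hLeq : ∑ i, π i * (a i i - 2 * (∑ j, a i j * π j) + Q)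
      = ∑ i, π i * a i i - Q := by
    have h1 : ∀ i, π i * (a i i - 2 * (∑ j, a i j * π j) + Q)
        = π i * a i i - 2 * (∑ j, π i * a i j * π j) + π i * Q := by
      intro i
      have e3 : ∑ j, π i * a i j * π j = π i * ∑ j, a i j * π j := by
        rw [Finset.mul_sum]
        exact Finset.sum_congr rfl fun j _ => by ring
      rw [e3]; ring
    rw [Finset.sum_congr rfl fun i _ => h1 i]
    rw [Finset.sum_add_distrib, Finset.sum_sub_distrib, ← Finset.sum_mul, hπ1, one_mul,
      ← Finset.mul_sum, ← hQ]
    ring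
  have hReq : ∑ i, π i * (K * (1 - 2 * π i + S)) = K * (1 - S) := by
    have h1 : ∀ i, π i * (K * (1 - 2 * π i + S)) = K * (π i - 2 * π i ^ 2 + π i * S) := by
      intro i; ring
    rw [Finset.sum_congr rfl fun i _ => h1 i, ← Finset.mul_sum]
    rw [Finset.sum_add_distrib, Finset.sum_sub_distrib, hπ1, ← Finset.sum_mul, hπ1, one_mul,
      ← Finset.mul_sum, ← hS]
    ring
  rw [hLeq, hReq] at hsum
  have h3 : K * (1 - S) ≤ K * (1 - M ^ 2) := mul_le_mul_of_nonneg_left (by linarith) hK.le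
  have h4 : K * (1 - M ^ 2) ≤ K * (2 * (1 - M)) :=
    mul_le_mul_of_nonneg_left (by nlinarith) hK.le
  have h5 : 0 ≤ K * (1 - M) := mul_nonneg hK.le (by linarith)
  nlinarith [hsum, h3, h4, h5]
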